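/- arXiv:2509.00424 — 4 statements merged into one kernel-verified Lean document; each statement's English description precedes it below -/
import Mathlib

section
/- Matrix-product (MPS/tensor-train) representation with bond dimensions equal to the unfolding ranks (linear-algebra core of Theorem 2). Let V be a finite-dimensional real vector space, q ≥ 1, T ≥ 1, and let C : (Fin T → Fin q) → V be a V-valued tensor with T physical indices each ranging over Fin q. For 1 ≤ τ ≤ T−1 let R_τ denote the cut-τ unfolding rank of C. Then there exist bond dimensions D_0 = 1 and D_τ = R_τ for 1 ≤ τ ≤ T−1, real matrices A_t(j) ∈ Matrix (Fin D_t) (Fin D_{t−1}) ℝ for each time t with 1 ≤ t ≤ T−1 and each physical index value j : Fin q, and a V-valued boundary tensor v : Fin q → Fin D_{T−1} → V, such that for every φ : Fin T → Fin q (writing φ_t for the index at time t, times labeled 1,…,T): C φ = ∑_{a_{T−1} : Fin D_{T−1}} ⋯ ∑_{a_1 : Fin D_1} ( [A_1(φ_1)]_{a_1,0} · [A_2(φ_2)]_{a_2,a_1} ⋯ [A_{T−1}(φ_{T−1})]_{a_{T−1},a_{T−2}} ) • v (φ_T) (a_{T−1}). -/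
/-- Concatenate a past tuple `p` (times `1,…,τ`) with a future tuple `f`
(times `τ+1,…,T`) into a full index tuple of length `T`. -/
def glueTuple (q T τ : ℕ) (p : Fin τ → Fin q) (f : Fin (T - τ) → Fin q) :
    Fin T → Fin q :=
  fun i => if h : i.val < τ then p ⟨i.val, h⟩
           else f ⟨i.val - τ, by have := i.isLt; omega⟩

def columnFun (q T : ℕ) {V : Type*} [AddCommGroup V] [Module ℝ V]
    (C : (Fin T → Fin q) → V) (τ : ℕ) (p : Fin τ → Fin q) :
    (Fin (T - τ) → Fin q) → V :=
  fun f => C (glueTuple q T τ p f)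

noncomputable def unfoldingRank (q T : ℕ) {V : Type*} [AddCommGroup V] [Module ℝ V]
    (C : (Fin T → Fin q) → V) (τ : ℕ) : ℕ :=
  Module.finrank ℝ
    (Submodule.span ℝ (Set.range (fun p : Fin τ → Fin q => columnFun q T C τ p)))

/-!
Let `W τ` be the span of the cut-`τ` column functions. Fixing the index `j` at time `τ + 1`, i.e.
precomposing with `f ↦ j :: f`, sends the column of `p` to the column of `p ⌢ j`, hence maps
`W τ` into `W (τ + 1)`. Expanding the images of a basis of `W τ` in a basis of `W (τ + 1)` gives
the transfer matrices `A (τ + 1) j`. Starting from the single vector `C ∈ W 0` and telescoping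
these expansions along `φ` writes `C φ` as a matrix product; what remains at the last cut is a
basis of `W (T - 1)` evaluated at the single remaining index, which is the boundary tensor.
-/

theorem sum_chain_prod_smul_eq_sum {R V : Type*} [CommSemiring R] [AddCommMonoid V] [Module R V]
    {d : ℕ → ℕ} (n : ℕ) (M : (t : Fin n) → Matrix (Fin (d (t + 1))) (Fin (d t)) R)
    (e : (t : ℕ) → Fin (d t) → V) (he : ∀ (t : Fin n) α, e t α = ∑ β, M t β α • e (t + 1) β) :
    ∑ a : (i : Fin (n + 1)) → Fin (d i),
        (∏ t : Fin n, M t (a t.succ) (a t.castSucc)) • e n (a (Fin.last n)) =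
      ∑ α, e 0 α := by
  induction n with
  | zero =>
    simpa using Fintype.sum_equiv (Equiv.piUnique fun i : Fin 1 => Fin (d i)) _ _ fun _ => rfl
  | succ n ih =>
    rw [← ih (fun t => M t.castSucc) fun t => he t.castSucc,
      ← (Fin.snocEquiv fun i : Fin (n + 2) => Fin (d i)).sum_comp, Fintype.sum_prod_type_right]
    refine Finset.sum_congr rfl fun a _ => ?_
    rw [he ⟨n, n.lt_succ_self⟩, Finset.smul_sum]
    refine Finset.sum_congr rfl fun β _ => ?_
    simp only [Fin.prod_univ_castSucc, Fin.snocEquiv_apply, smul_smul, Fin.snoc_last,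
      Fin.succ_castSucc, Fin.snoc_castSucc, Fin.succ_last]
    rfl

namespace MPS

open Submodule

def consFuture {q : ℕ} (T τ : ℕ) (j : Fin q) (f : Fin (T - (τ + 1)) → Fin q) (k : Fin (T - τ)) :
    Fin q :=
  if h : (k : ℕ) = 0 then j else f ⟨k - 1, by omega⟩

def futureTuple {q T : ℕ} (τ : ℕ) (φ : Fin T → Fin q) (k : Fin (T - τ)) : Fin q :=
  φ ⟨τ + k, by omega⟩

section Tuples

variable {q T : ℕ}

theorem glueTuple_consFuture {τ : ℕ} (p : Fin τ → Fin q) (j : Fin q)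
    (f : Fin (T - (τ + 1)) → Fin q) :
    glueTuple q T τ p (consFuture T τ j f) = glueTuple q T (τ + 1) (Fin.snoc p j) f := by
  funext i
  simp only [glueTuple, consFuture, Fin.snoc]
  split_ifs <;> first | rfl | omega

theorem consFuture_futureTuple {τ : ℕ} (hτ : τ < T) (φ : Fin T → Fin q) :
    consFuture T τ (φ ⟨τ, hτ⟩) (futureTuple (τ + 1) φ) = futureTuple τ φ := by
  funext k
  simp only [consFuture, futureTuple]
  split_ifs with hk
  · exact congrArg φ (Fin.ext (by simp [hk]))
  · exact congrArg φ (Fin.ext (by simp; omega))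

theorem glueTuple_futureTuple_zero (φ : Fin T → Fin q) :
    glueTuple q T 0 Fin.elim0 (futureTuple 0 φ) = φ := by
  funext i
  simp [glueTuple, futureTuple]

theorem futureTuple_last {n : ℕ} (φ : Fin (n + 1) → Fin q) :
    futureTuple n φ = fun _ => φ (Fin.last n) :=
  funext fun k => congrArg φ (Fin.ext (by simp; omega))

end Tuples

variable {q T : ℕ} {V : Type*} [AddCommGroup V] [Module ℝ V] (C : (Fin T → Fin q) → V)

def columnSpace (τ : ℕ) : Submodule ℝ ((Fin (T - τ) → Fin q) → V) :=
  span ℝ (Set.range (columnFun q T C τ))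

instance (τ : ℕ) : Module.Finite ℝ (columnSpace C τ) :=
  Module.Finite.span_of_finite ℝ (Set.finite_range _)

theorem columnFun_comp_consFuture {τ : ℕ} (p : Fin τ → Fin q) (j : Fin q) :
    columnFun q T C τ p ∘ consFuture T τ j = columnFun q T C (τ + 1) (Fin.snoc p j) :=
  funext fun f => congrArg C (glueTuple_consFuture p j f)

theorem columnSpace_le_comap_funLeft_consFuture (τ : ℕ) (j : Fin q) :
    columnSpace C τ ≤ (columnSpace C (τ + 1)).comap (LinearMap.funLeft ℝ V (consFuture T τ j)) :=
  span_le.2 <| Set.range_subset_iff.2 fun p =>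
    subset_span ⟨Fin.snoc p j, (columnFun_comp_consFuture C p j).symm⟩

/-- At cut `0` the bond is the single vector `C` itself rather than a basis of `columnSpace C 0`,
which would be empty for `C = 0`. -/
noncomputable def bondDim : ℕ → ℕ
  | 0 => 1
  | τ + 1 => unfoldingRank q T C (τ + 1)

noncomputable def bondBasis : (τ : ℕ) → Fin (bondDim C τ) → (Fin (T - τ) → Fin q) → V
  | 0 => fun _ => columnFun q T C 0 Fin.elim0
  | τ + 1 => fun α => Module.finBasis ℝ (columnSpace C (τ + 1)) α

theorem bondBasis_mem : ∀ τ α, bondBasis C τ α ∈ columnSpace C τ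
  | 0, _ => subset_span ⟨_, rfl⟩
  | _ + 1, α => (Module.finBasis ℝ (columnSpace C _) α).2

theorem sum_bondBasis_zero_futureTuple (φ : Fin T → Fin q) :
    ∑ α, bondBasis C 0 α (futureTuple 0 φ) = C φ :=
  (Fin.sum_univ_one _).trans (congrArg C (glueTuple_futureTuple_zero φ))

noncomputable def transferMatrix (τ : ℕ) (j : Fin q) :
    Matrix (Fin (bondDim C (τ + 1))) (Fin (bondDim C τ)) ℝ :=
  fun β α => (Module.finBasis ℝ (columnSpace C (τ + 1))).repr
    ⟨bondBasis C τ α ∘ consFuture T τ j,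
      columnSpace_le_comap_funLeft_consFuture C τ j (bondBasis_mem C τ α)⟩ β

theorem bondBasis_comp_consFuture (τ : ℕ) (j : Fin q) (α : Fin (bondDim C τ)) :
    bondBasis C τ α ∘ consFuture T τ j =
      ∑ β, transferMatrix C τ j β α • bondBasis C (τ + 1) β := by
  have h := (Module.finBasis ℝ (columnSpace C (τ + 1))).sum_repr
    ⟨_, columnSpace_le_comap_funLeft_consFuture C τ j (bondBasis_mem C τ α)⟩
  exact (congrArg Subtype.val h).symm.trans (coe_sum _ _ _)

theorem bondBasis_futureTuple {τ : ℕ} (hτ : τ < T) (φ : Fin T → Fin q) (α : Fin (bondDim C τ)) :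
    bondBasis C τ α (futureTuple τ φ) =
      ∑ β, transferMatrix C τ (φ ⟨τ, hτ⟩) β α • bondBasis C (τ + 1) β (futureTuple (τ + 1) φ) := by
  rw [← consFuture_futureTuple hτ, ← Function.comp_apply (f := bondBasis C τ α),
    bondBasis_comp_consFuture, Finset.sum_apply]
  rfl

end MPS

open MPS

/-- **MPS existence with bond dimensions equal to the unfolding ranks**
(linear-algebra core of Theorem 2): every `V`-valued tensor with `T` physical
indices admits a matrix-product (tensor-train) representation whose bond
dimension at cut `τ` equals the cut-`τ` unfolding rank. -/
theorem mps_existence (q T : ℕ) (hT : 1 ≤ T)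
    {V : Type*} [AddCommGroup V] [Module ℝ V]
    (C : (Fin T → Fin q) → V) :
    ∃ D : ℕ → ℕ, D 0 = 1 ∧
      (∀ τ : ℕ, 1 ≤ τ → τ ≤ T - 1 → D τ = unfoldingRank q T C τ) ∧
      ∃ (A : (t : ℕ) → Fin q → Matrix (Fin (D t)) (Fin (D (t - 1))) ℝ)
        (v : Fin q → Fin (D (T - 1)) → V),
        ∀ φ : Fin T → Fin q,
          C φ = ∑ a : (τ : Fin T) → Fin (D τ.val),
            (∏ t : Fin (T - 1),
              A (t.val + 1) (φ ⟨t.val, by have := t.isLt; omega⟩)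
                (a ⟨t.val + 1, by have := t.isLt; omega⟩)
                (a ⟨t.val, by have := t.isLt; omega⟩))
            • v (φ ⟨T - 1, by omega⟩) (a ⟨T - 1, by omega⟩) := by
  obtain ⟨n, rfl⟩ : ∃ n, T = n + 1 := ⟨T - 1, by omega⟩
  refine ⟨bondDim C, rfl, fun τ hτ _ => ?_, fun | 0 => 0 | t + 1 => transferMatrix C t,
    fun j α => bondBasis C n α fun _ => j, fun φ => ?_⟩
  · obtain ⟨τ, rfl⟩ := Nat.exists_eq_add_of_le' hτ
    rfl
  · have hchain := sum_chain_prod_smul_eq_sum n (fun t => transferMatrix C t (φ ⟨t, by omega⟩))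
      (fun t α => bondBasis C t α (futureTuple t φ)) fun t => bondBasis_futureTuple C (by omega) φ
    rw [futureTuple_last, sum_bondBasis_zero_futureTuple] at hchain
    exact hchain.symm
end

section
/- Finite-memory bond-dimension bound (tensor-level content of Corollary 1). Let V be a finite-dimensional real vector space, q ≥ 1, T ≥ 1, and C : (Fin T → Fin q) → V. Suppose C has memory length m in the sense that for every cut τ with 1 ≤ τ ≤ T−1 and any two past tuples p, p' : Fin τ → Fin q that agree on their last min(τ, m) coordinates (i.e., p_s = p'_s for all s with τ − min(τ,m) < s ≤ τ), the column functions coincide: C (p⌢f) = C (p'⌢f) for every future tuple f. Then for every such τ the cut-τ unfolding rank satisfies R_τ ≤ q ^ (min τ m); consequently C admits a matrix-product representation as in the MPS existence theorem whose bond dimension at every cut τ is at most q ^ (min τ m). -/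
section Automaton

variable {α : Type*} {D : ℕ → ℕ} {n : ℕ} (δ : (t : ℕ) → Fin (D t) → α → Fin (D (t + 1)))

def transferMatrix : (t : ℕ) → α → Matrix (Fin (D t)) (Fin (D (t - 1))) ℝ
  | 0, _ => 0 -- never enters the contraction
  | t + 1, x => Matrix.of fun j i => if j = δ t i x then 1 else 0

theorem transferMatrix_succ_apply (t : ℕ) (x : α) (j : Fin (D (t + 1))) (i : Fin (D t)) :
    transferMatrix δ (t + 1) x j i = if j = δ t i x then 1 else 0 :=
  rfl

def IsRun (φ : Fin (n + 1) → α) (a : (τ : Fin (n + 1)) → Fin (D τ)) : Prop :=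
  ∀ t : Fin n, a t.succ = δ t (a t.castSucc) (φ t.castSucc)

instance (φ : Fin (n + 1) → α) (a : (τ : Fin (n + 1)) → Fin (D τ)) :
    Decidable (IsRun δ φ a) :=
  Fintype.decidableForallFintype

variable {δ}

theorem prod_transferMatrix (φ : Fin (n + 1) → α) (a : (τ : Fin (n + 1)) → Fin (D τ)) :
    ∏ t : Fin n, transferMatrix δ (t + 1) (φ t.castSucc) (a t.succ) (a t.castSucc)
      = if IsRun δ φ a then 1 else 0 := by
  simp only [transferMatrix_succ_apply]
  rw [Fintype.prod_boole]
  rfl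

theorem IsRun.unique (hD : D 0 = 1) {φ : Fin (n + 1) → α}
    {a b : (τ : Fin (n + 1)) → Fin (D τ)} (ha : IsRun δ φ a) (hb : IsRun δ φ b) : a = b := by
  funext τ
  induction τ using Fin.induction with
  | zero =>
    have : Subsingleton (Fin (D 0)) := by rw [hD]; infer_instance
    exact Subsingleton.elim (α := Fin (D 0)) _ _
  | succ t ih => rw [ha t, hb t, ih]

theorem sum_prod_transferMatrix_smul {V : Type*} [AddCommGroup V] [Module ℝ V]
    (hD : D 0 = 1) {φ : Fin (n + 1) → α} {r : (τ : Fin (n + 1)) → Fin (D τ)}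
    (hr : IsRun δ φ r) (w : ((τ : Fin (n + 1)) → Fin (D τ)) → V) :
    ∑ a : (τ : Fin (n + 1)) → Fin (D τ),
      (∏ t : Fin n, transferMatrix δ (t + 1) (φ t.castSucc) (a t.succ) (a t.castSucc)) • w a
      = w r := by
  have hrun : ∀ a, IsRun δ φ a ↔ a = r := fun a => ⟨fun ha => ha.unique hD hr, fun h => h ▸ hr⟩
  simp only [prod_transferMatrix, hrun, ite_smul, one_smul, zero_smul, Fintype.sum_ite_eq']

end Automaton

section Suffix

variable {α : Type*} (m : ℕ)

def suffix {τ : ℕ} (w : Fin τ → α) : Fin (min τ m) → α :=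
  fun i => w ⟨τ - min τ m + i, by omega⟩

def padSuffix (a₀ : α) {τ : ℕ} (s : Fin (min τ m) → α) : Fin τ → α :=
  fun j => if h : τ - min τ m ≤ j then s ⟨j - (τ - min τ m), by omega⟩ else a₀

-- The window grows by one letter until it has length `m`; from then on its oldest letter drops out.
def shiftIn {t : ℕ} (s : Fin (min t m) → α) (x : α) : Fin (min (t + 1) m) → α :=
  fun k => if h : k.val + 1 < min (t + 1) m then s ⟨k + 1 + min t m - min (t + 1) m, by omega⟩
    else x

variable {m}

theorem suffix_padSuffix (a₀ : α) {τ : ℕ} (s : Fin (min τ m) → α) :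
    suffix m (padSuffix m a₀ s) = s := by
  funext i
  simp only [suffix, padSuffix, dif_pos (show τ - min τ m ≤ τ - min τ m + i by omega)]
  congr 1
  ext
  dsimp only
  omega

theorem padSuffix_suffix_apply (a₀ : α) {τ : ℕ} (w : Fin τ → α) (j : Fin τ)
    (hj : τ - min τ m ≤ j) : padSuffix m a₀ (suffix m w) j = w j := by
  simp only [padSuffix, suffix, dif_pos hj]
  congr 1
  ext
  dsimp only
  omega

theorem suffix_snoc {t : ℕ} (w : Fin t → α) (x : α) :
    suffix m (Fin.snoc w x : Fin (t + 1) → α) = shiftIn m (suffix m w) x := by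
  funext k
  simp only [suffix, shiftIn, Fin.snoc, cast_eq]
  split_ifs with h₁ h₂ h₂
  · congr 1
    ext
    simp only [Fin.val_castLT]
    omega
  · omega
  · omega
  · rfl

end Suffix

section FiniteMemory

variable {q T m : ℕ} {V : Type*}

def HasMemoryLength (q T m : ℕ) (C : (Fin T → Fin q) → V) : Prop :=
  ∀ τ : ℕ, 1 ≤ τ → τ ≤ T - 1 → ∀ p p' : Fin τ → Fin q,
    (∀ s : Fin τ, τ - min τ m ≤ s.val → p s = p' s) →
    ∀ f : Fin (T - τ) → Fin q, C (glueTuple q T τ p f) = C (glueTuple q T τ p' f)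

theorem glueTuple_take (φ : Fin T → Fin q) {τ : ℕ} (hτ : τ ≤ T) (f : Fin (T - τ) → Fin q)
    (hf : ∀ i, f i = φ ⟨τ + i, by omega⟩) : glueTuple q T τ (Fin.take τ hτ φ) f = φ := by
  funext i
  unfold glueTuple
  split_ifs with h
  · rfl
  · rw [hf]
    congr 1
    ext
    dsimp only
    omega

def memoryStep (q m t : ℕ) (i : Fin (q ^ min t m)) (x : Fin q) : Fin (q ^ min (t + 1) m) :=
  finFunctionFinEquiv (shiftIn m (finFunctionFinEquiv.symm i) x)

def memoryRun (m : ℕ) (φ : Fin T → Fin q) (τ : Fin T) : Fin (q ^ min τ.val m) :=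
  finFunctionFinEquiv (suffix m (Fin.take τ τ.isLt.le φ))

theorem isRun_memoryRun {n : ℕ} (φ : Fin (n + 1) → Fin q) :
    IsRun (memoryStep q m) φ (memoryRun m φ) := by
  intro t
  simp only [memoryRun, memoryStep, Equiv.symm_apply_apply, Fin.val_succ, Fin.val_castSucc,
    Fin.take_succ_eq_snoc, suffix_snoc]
  rfl

def memoryBoundary {n : ℕ} (m : ℕ) (hq : 0 < q) (C : (Fin (n + 1) → Fin q) → V) (x : Fin q)
    (j : Fin (q ^ min n m)) : V :=
  C (glueTuple q (n + 1) n (padSuffix m ⟨0, hq⟩ (finFunctionFinEquiv.symm j)) fun _ => x)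

namespace HasMemoryLength

variable {C : (Fin T → Fin q) → V}

theorem apply_glueTuple_eq (hC : HasMemoryLength q T m C) {τ : ℕ} (hτ : τ ≤ T - 1)
    (p p' : Fin τ → Fin q) (hpp' : ∀ s : Fin τ, τ - min τ m ≤ s.val → p s = p' s)
    (f : Fin (T - τ) → Fin q) : C (glueTuple q T τ p f) = C (glueTuple q T τ p' f) := by
  rcases Nat.eq_zero_or_pos τ with rfl | hτ₀
  · rw [Subsingleton.elim p p']
  · exact hC τ hτ₀ hτ p p' hpp' f

theorem memoryBoundary_memoryRun {n : ℕ} {C : (Fin (n + 1) → Fin q) → V}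
    (hC : HasMemoryLength q (n + 1) m C) (hq : 0 < q) (φ : Fin (n + 1) → Fin q) :
    memoryBoundary m hq C (φ (Fin.last n)) (memoryRun m φ (Fin.last n)) = C φ := by
  rw [memoryBoundary, memoryRun, Equiv.symm_apply_apply]
  refine (hC.apply_glueTuple_eq (τ := n) le_rfl _ (Fin.take n n.le_succ φ)
    (fun s hs => padSuffix_suffix_apply _ _ s hs) _).trans
    (congrArg C (glueTuple_take φ _ _ fun i => ?_))
  congr 1
  ext
  simp only [Fin.val_last]
  omega

variable [AddCommGroup V] [Module ℝ V]

theorem columnFun_padSuffix_suffix (hC : HasMemoryLength q T m C) (hq : 0 < q) {τ : ℕ}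
    (hτ : τ ≤ T - 1) (p : Fin τ → Fin q) :
    columnFun q T C τ (padSuffix m ⟨0, hq⟩ (suffix m p)) = columnFun q T C τ p :=
  funext <| hC.apply_glueTuple_eq hτ _ _ fun s hs => padSuffix_suffix_apply _ p s hs

theorem unfoldingRank_le (hC : HasMemoryLength q T m C) (hq : 0 < q) {τ : ℕ}
    (hτ : τ ≤ T - 1) : unfoldingRank q T C τ ≤ q ^ min τ m := by
  have hfactor : (fun p => columnFun q T C τ p)
      = (fun s => columnFun q T C τ (padSuffix m ⟨0, hq⟩ s)) ∘ suffix m :=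
    funext fun p => (hC.columnFun_padSuffix_suffix hq hτ p).symm
  have hsurj : Function.Surjective (suffix m : (Fin τ → Fin q) → _) :=
    Function.RightInverse.surjective (suffix_padSuffix ⟨0, hq⟩)
  rw [unfoldingRank, hfactor, hsurj.range_comp]
  exact (finrank_range_le_card _).trans_eq (by simp)

end HasMemoryLength

end FiniteMemory

/-- **Finite-memory bond-dimension bound** (tensor-level content of Corollary 1):
if the column functions of a tensor `C` only depend on the last `min τ m`
coordinates of the past tuple, then every cut-`τ` unfolding rank is at most
`q ^ (min τ m)`, and `C` admits a matrix-product representation whose bond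
dimension at every cut `τ` is at most `q ^ (min τ m)`. -/
theorem finite_memory_bond_bound (q T m : ℕ) (hq : 1 ≤ q) (hT : 1 ≤ T)
    {V : Type*} [AddCommGroup V] [Module ℝ V]
    (C : (Fin T → Fin q) → V)
    (hmem : ∀ τ : ℕ, 1 ≤ τ → τ ≤ T - 1 → ∀ p p' : Fin τ → Fin q,
      (∀ s : Fin τ, τ - min τ m ≤ s.val → p s = p' s) →
      ∀ f : Fin (T - τ) → Fin q, C (glueTuple q T τ p f) = C (glueTuple q T τ p' f)) :
    (∀ τ : ℕ, 1 ≤ τ → τ ≤ T - 1 → unfoldingRank q T C τ ≤ q ^ (min τ m)) ∧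
    ∃ D : ℕ → ℕ, D 0 = 1 ∧
      (∀ τ : ℕ, 1 ≤ τ → τ ≤ T - 1 → D τ ≤ q ^ (min τ m)) ∧
      ∃ (A : (t : ℕ) → Fin q → Matrix (Fin (D t)) (Fin (D (t - 1))) ℝ)
        (v : Fin q → Fin (D (T - 1)) → V),
        ∀ φ : Fin T → Fin q,
          C φ = ∑ a : (τ : Fin T) → Fin (D τ.val),
            (∏ t : Fin (T - 1),
              A (t.val + 1) (φ ⟨t.val, by have := t.isLt; omega⟩)
                (a ⟨t.val + 1, by have := t.isLt; omega⟩)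
                (a ⟨t.val, by have := t.isLt; omega⟩))
            • v (φ ⟨T - 1, by omega⟩) (a ⟨T - 1, by omega⟩) := by
  have hC : HasMemoryLength q T m C := hmem
  obtain ⟨n, rfl⟩ : ∃ n, T = n + 1 := ⟨T - 1, by omega⟩
  refine ⟨fun τ _ hτ => hC.unfoldingRank_le hq hτ, fun τ => q ^ min τ m, by simp,
    fun _ _ _ => le_rfl, transferMatrix (memoryStep q m), memoryBoundary m hq C, fun φ => ?_⟩
  exact ((sum_prod_transferMatrix_smul (by simp) (isRun_memoryRun φ)
    fun a => memoryBoundary m hq C (φ (Fin.last n)) (a (Fin.last n))).trans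
    (hC.memoryBoundary_memoryRun hq φ)).symm
end

section
/- Kernel tensors pairwise commute: fix t, q : ℕ and set I := Fin (q+1) (with 0 the null index). Let c : Finset (Fin t) → ((Fin t) → I) → ℝ be a cumulant family satisfying (i) locality: c Θ φ = c Θ φ' whenever φ τ = φ' τ for all τ ∈ Θ, and (ii) null-vanishing: c Θ φ = 0 whenever there exists τ ∈ Θ with φ τ = 0. For each nonempty Θ : Finset (Fin t), define the kernel tensor K Θ as the square matrix indexed by tuples (Fin t → I) with entries K Θ Φ' Φ := (if Φ' = Φ then 1 else 0) + (if ((∀ τ ∉ Θ, Φ' τ = Φ τ) ∧ (∀ τ ∈ Θ, Φ' τ = 0)) then 1 else 0) * c Θ Φ. Then for all nonempty Θ₁, Θ₂ : Finset (Fin t), the matrix products satisfy K Θ₁ * K Θ₂ = K Θ₂ * K Θ₁ (whether or not Θ₁ and Θ₂ overlap). -/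
/-- The kernel tensor `K̃(Θ)` associated to a cumulant family `c`: the matrix on
index-tuple space with entries
`K Θ Φ' Φ = δ_{Φ',Φ} + δ(Φ' = Φ off Θ)·δ(Φ' = 0 on Θ)·c Θ Φ`. -/
def Ker (t q : ℕ) (c : Finset (Fin t) → ((Fin t) → Fin (q + 1)) → ℝ)
    (Θ : Finset (Fin t)) :
    Matrix ((Fin t) → Fin (q + 1)) ((Fin t) → Fin (q + 1)) ℝ :=
  fun Φ' Φ =>
    (if Φ' = Φ then 1 else 0)
      + (if ((∀ τ ∉ Θ, Φ' τ = Φ τ) ∧ (∀ τ ∈ Θ, Φ' τ = 0)) then 1 else 0) * c Θ Φ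

/-!
Write `K̃(Θ) = 1 + N(Θ)`, where `N(Θ)` sends the tuple `Φ` to the tuple `Φ` with its entries
on `Θ` reset to the null index, with weight `c Θ Φ`. Matrices of this "weighted map" shape
compose by composing the maps and multiplying the weights, so `N(Θ₁) N(Θ₂)` resets
`Θ₁ ∪ Θ₂` with weight `c Θ₁ (Φ reset on Θ₂) · c Θ₂ Φ`. If `Θ₁` and `Θ₂` are disjoint,
locality removes the reset and the weight is `c Θ₁ Φ · c Θ₂ Φ`; if they meet, the reset puts
a null index inside `Θ₁` and the weight vanishes. Either way it is symmetric in `Θ₁, Θ₂`.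
-/

namespace Matrix

variable {l m n R : Type*} [Fintype n] [DecidableEq m] [DecidableEq n] [Semiring R]

def weightedMap (f : n → m) (w : n → R) : Matrix m n R :=
  of fun i j => if i = f j then w j else 0

theorem weightedMap_mul_weightedMap (f : n → m) (w : n → R) (g : l → n) (v : l → R) :
    weightedMap f w * weightedMap g v = weightedMap (f ∘ g) (fun j => w (g j) * v j) := by
  ext i j
  simp only [weightedMap, mul_apply, of_apply, mul_ite, ite_mul, zero_mul, mul_zero,
    Finset.sum_ite_eq', Finset.mem_univ, if_true, Function.comp_apply]

end Matrix

section Reset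

variable {α β : Type*} [DecidableEq α] [Zero β]

def resetOn (s : Finset α) (y : α → β) : α → β :=
  fun a => if a ∈ s then 0 else y a

theorem eq_resetOn_iff (s : Finset α) (x y : α → β) :
    ((∀ a ∉ s, x a = y a) ∧ (∀ a ∈ s, x a = 0)) ↔ x = resetOn s y := by
  refine ⟨fun ⟨hout, hin⟩ => funext fun a => ?_, fun h => ?_⟩
  · by_cases ha : a ∈ s <;> simp [resetOn, ha, hin, hout]
  · subst h
    exact ⟨fun a ha => by simp [resetOn, ha], fun a ha => by simp [resetOn, ha]⟩

theorem resetOn_comm (s u : Finset α) (y : α → β) :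
    resetOn s (resetOn u y) = resetOn u (resetOn s y) := by
  ext a
  by_cases hs : a ∈ s <;> by_cases hu : a ∈ u <;> simp [resetOn, hs, hu]

variable {R : Type*} [Zero R] {c : Finset α → (α → β) → R}

theorem apply_resetOn_of_local_of_null
    (hloc : ∀ (s : Finset α) (φ φ' : α → β), (∀ a ∈ s, φ a = φ' a) → c s φ = c s φ')
    (hnull : ∀ (s : Finset α) (φ : α → β), (∃ a ∈ s, φ a = 0) → c s φ = 0)
    (s u : Finset α) (y : α → β) :
    c s (resetOn u y) = if Disjoint s u then c s y else 0 := by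
  split_ifs with hsu
  · exact hloc s _ _ fun a ha => if_neg (Finset.disjoint_left.mp hsu ha)
  · obtain ⟨a, has, hau⟩ := Finset.not_disjoint_iff.mp hsu
    exact hnull s _ ⟨a, has, if_pos hau⟩

end Reset

theorem Ker_eq_one_add (t q : ℕ) (c : Finset (Fin t) → ((Fin t) → Fin (q + 1)) → ℝ)
    (Θ : Finset (Fin t)) :
    Ker t q c Θ = 1 + Matrix.weightedMap (resetOn Θ) (c Θ) := by
  ext Φ' Φ
  simp only [Ker, Matrix.add_apply, Matrix.one_apply, Matrix.weightedMap, Matrix.of_apply,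
    eq_resetOn_iff, ite_mul, one_mul, zero_mul]

theorem kernel_tensors_commute_general (t q : ℕ)
    (c : Finset (Fin t) → ((Fin t) → Fin (q + 1)) → ℝ)
    (hloc : ∀ (Θ : Finset (Fin t)) (φ φ' : (Fin t) → Fin (q + 1)),
      (∀ τ ∈ Θ, φ τ = φ' τ) → c Θ φ = c Θ φ')
    (hnull : ∀ (Θ : Finset (Fin t)) (φ : (Fin t) → Fin (q + 1)),
      (∃ τ ∈ Θ, φ τ = 0) → c Θ φ = 0)
    (Θ₁ Θ₂ : Finset (Fin t)) :
    Ker t q c Θ₁ * Ker t q c Θ₂ = Ker t q c Θ₂ * Ker t q c Θ₁ := by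
  set N : Finset (Fin t) → Matrix _ _ ℝ := fun Θ => Matrix.weightedMap (resetOn Θ) (c Θ)
  have hN : Commute (N Θ₁) (N Θ₂) := by
    simp only [Commute, SemiconjBy, N, Matrix.weightedMap_mul_weightedMap,
      apply_resetOn_of_local_of_null hloc hnull, disjoint_comm (a := Θ₂)]
    congr 1
    · exact funext (resetOn_comm Θ₁ Θ₂)
    · funext Φ
      split_ifs <;> ring
  simp only [Ker_eq_one_add]
  exact ((Commute.one_left _).add_left ((Commute.one_right _).add_right hN)).eq

/-- **Kernel tensors pairwise commute**: for any cumulant family satisfying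
locality and null-vanishing, the kernel tensors of any two nonempty index
subsets commute as matrices (whether or not the subsets overlap). -/
theorem kernel_tensors_commute (t q : ℕ)
    (c : Finset (Fin t) → ((Fin t) → Fin (q + 1)) → ℝ)
    (hloc : ∀ (Θ : Finset (Fin t)) (φ φ' : (Fin t) → Fin (q + 1)),
      (∀ τ ∈ Θ, φ τ = φ' τ) → c Θ φ = c Θ φ')
    (hnull : ∀ (Θ : Finset (Fin t)) (φ : (Fin t) → Fin (q + 1)),
      (∃ τ ∈ Θ, φ τ = 0) → c Θ φ = 0)
    (Θ₁ Θ₂ : Finset (Fin t)) (h₁ : Θ₁.Nonempty) (h₂ : Θ₂.Nonempty) :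
    Ker t q c Θ₁ * Ker t q c Θ₂ = Ker t q c Θ₂ * Ker t q c Θ₁ :=
  kernel_tensors_commute_general t q c hloc hnull Θ₁ Θ₂
end

section
/- Contraction of all kernel tensors yields the correlation tensor (main identity of Appendix A, Eq. (A5) in closed form): fix t, q : ℕ, I := Fin (q+1), and let c be a cumulant family satisfying locality and null-vanishing as above, with kernel tensors K Θ for nonempty Θ : Finset (Fin t) as above. Since the kernel tensors pairwise commute, their product over the finite set of all nonempty subsets Θ ⊆ Fin t is well defined independently of order (e.g., as a noncommProd with the commutativity witness). Define the correlation tensor 𝐂 : ((Fin t) → I) → ℝ by 𝐂 Φ := ∑ over all finite partitions π of the support supp Φ := {τ : Fin t | Φ τ ≠ 0} into nonempty blocks, of ∏_{B ∈ π} c B Φ (the empty partition of the empty support contributing 1). Then for every tuple Φ : (Fin t) → I, the entry of the product matrix ∏_{Θ nonempty} K Θ at row index the all-zero tuple and column index Φ equals 𝐂 Φ. -/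
/-- The support of an index tuple: the set of times carrying a non-null index. -/
def tupleSupp (t q : ℕ) (Φ : (Fin t) → Fin (q + 1)) : Finset (Fin t) :=
  Finset.univ.filter (fun τ => Φ τ ≠ 0)

/-- The correlation tensor defined from the cumulants by the moment–cumulant
partition sum: `𝐂 Φ = ∑_{π partition of supp Φ} ∏_{B ∈ π} c B Φ`, where the sum
runs over all collections of pairwise-disjoint nonempty blocks whose union is
`supp Φ` (the empty partition of the empty support contributing `1`). -/
def corr (t q : ℕ) (c : Finset (Fin t) → ((Fin t) → Fin (q + 1)) → ℝ)
    (Φ : (Fin t) → Fin (q + 1)) : ℝ :=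
  ∑ π ∈ Finset.univ.filter
      (fun π : Finset (Finset (Fin t)) =>
        (∀ B ∈ π, B.Nonempty) ∧
        (∀ B ∈ π, ∀ B' ∈ π, B ≠ B' → B ∩ B' = ∅) ∧
        π.sup id = tupleSupp t q Φ),
    ∏ B ∈ π, c B Φ

namespace Finset

variable {α : Type*} [DecidableEq α]

open scoped Classical in
noncomputable def partitionsFrom (S : Finset (Finset α)) (s : Finset α) :
    Finset (Finset (Finset α)) :=
  S.powerset.filter fun π => (π : Set (Finset α)).PairwiseDisjoint id ∧ π.sup id = s

lemma mem_partitionsFrom {S : Finset (Finset α)} {s : Finset α} {π : Finset (Finset α)} :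
    π ∈ partitionsFrom S s ↔
      π ⊆ S ∧ (π : Set (Finset α)).PairwiseDisjoint id ∧ π.sup id = s := by
  simp [partitionsFrom]

lemma partitionsFrom_empty (s : Finset α) :
    partitionsFrom ∅ s = if s = ∅ then {∅} else ∅ := by
  rw [partitionsFrom, powerset_empty, filter_singleton]
  simp [eq_comm]

lemma sup_erase_of_pairwiseDisjoint {π : Finset (Finset α)}
    (hπ : (π : Set (Finset α)).PairwiseDisjoint id) {Θ : Finset α} (hΘ : Θ ∈ π) :
    (π.erase Θ).sup id = π.sup id \ Θ := by
  have hdisj : Disjoint Θ ((π.erase Θ).sup id) :=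
    Finset.disjoint_sup_right.2 fun B hB =>
      hπ hΘ (mem_of_mem_erase hB) (ne_of_mem_erase hB).symm
  rw [← insert_erase hΘ, sup_insert, id, erase_insert (notMem_erase Θ π),
    sup_eq_union, union_sdiff_cancel_left hdisj]

lemma partitionsFrom_insert_of_not_subset {S : Finset (Finset α)} {s Θ : Finset α}
    (hΘ : ¬Θ ⊆ s) : partitionsFrom (insert Θ S) s = partitionsFrom S s := by
  ext π
  simp only [mem_partitionsFrom, subset_insert_iff]
  refine ⟨fun ⟨hS, hd, hs⟩ => ⟨?_, hd, hs⟩, fun ⟨hS, hd, hs⟩ => ⟨?_, hd, hs⟩⟩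
  · have hΘπ : Θ ∉ π := fun h => hΘ (hs ▸ le_sup (f := id) h)
    rwa [erase_eq_of_notMem hΘπ] at hS
  · exact (erase_subset Θ π).trans hS

lemma partitionsFrom_insert {S : Finset (Finset α)} {s Θ : Finset α}
    (hΘS : Θ ∉ S) (hΘ : Θ ⊆ s) :
    partitionsFrom (insert Θ S) s =
      partitionsFrom S s ∪ (partitionsFrom S (s \ Θ)).image (insert Θ) := by
  ext π
  simp only [mem_union, mem_image, mem_partitionsFrom]
  constructor
  · rintro ⟨hS, hd, hs⟩
    by_cases hΘπ : Θ ∈ π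
    · have hσ : (π.erase Θ).sup id = s \ Θ := by
        rw [sup_erase_of_pairwiseDisjoint hd hΘπ, hs]
      exact Or.inr ⟨π.erase Θ, ⟨subset_insert_iff.1 hS,
        hd.subset (coe_subset.2 (erase_subset Θ π)), hσ⟩, insert_erase hΘπ⟩
    · refine Or.inl ⟨fun B hB => (mem_insert.1 (hS hB)).resolve_left ?_, hd, hs⟩
      rintro rfl
      exact hΘπ hB
  · rintro (⟨hS, hd, hs⟩ | ⟨σ, ⟨hS, hd, hs⟩, rfl⟩)
    · exact ⟨hS.trans (subset_insert _ _), hd, hs⟩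
    · refine ⟨insert_subset_insert Θ hS, ?_, ?_⟩
      · rw [coe_insert]
        refine hd.insert fun B hB _ => ?_
        have hB' : B ⊆ s \ Θ := hs ▸ le_sup (f := id) hB
        exact disjoint_sdiff_self_right.mono_right hB'
      · rw [sup_insert, hs, id, sup_eq_union, union_sdiff_of_subset hΘ]

lemma sum_partitionsFrom_insert {β : Type*} [AddCommMonoid β] {S : Finset (Finset α)}
    {s Θ : Finset α} (hΘS : Θ ∉ S) (hΘ : Θ ⊆ s) (f : Finset (Finset α) → β) :
    ∑ π ∈ partitionsFrom (insert Θ S) s, f π =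
      ∑ π ∈ partitionsFrom S s, f π + ∑ σ ∈ partitionsFrom S (s \ Θ), f (insert Θ σ) := by
  have hnotMem : ∀ σ ∈ partitionsFrom S (s \ Θ), Θ ∉ σ := fun σ hσ h =>
    hΘS ((mem_partitionsFrom.1 hσ).1 h)
  rw [partitionsFrom_insert hΘS hΘ, sum_union, sum_image]
  · exact fun σ hσ σ' hσ' h => by
      rw [← erase_insert (hnotMem σ hσ), h, erase_insert (hnotMem σ' hσ')]
  · refine disjoint_left.2 fun π hπ hπ' => ?_
    obtain ⟨σ, -, rfl⟩ := mem_image.1 hπ'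
    exact hΘS ((mem_partitionsFrom.1 hπ).1 (mem_insert_self Θ σ))

end Finset

section Kernel

variable {t q : ℕ}

open Finset

lemma tupleSupp_piecewise_zero (Θ : Finset (Fin t)) (Φ : Fin t → Fin (q + 1)) :
    tupleSupp t q (Θ.piecewise 0 Φ) = tupleSupp t q Φ \ Θ := by
  ext τ
  by_cases hτ : τ ∈ Θ <;> simp [tupleSupp, hτ]

lemma tupleSupp_eq_empty {Φ : Fin t → Fin (q + 1)} : tupleSupp t q Φ = ∅ ↔ Φ = 0 := by
  simp [tupleSupp, filter_eq_empty_iff, funext_iff]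

lemma Ker_apply (c : Finset (Fin t) → (Fin t → Fin (q + 1)) → ℝ) (Θ : Finset (Fin t))
    (Ψ Φ : Fin t → Fin (q + 1)) :
    Ker t q c Θ Ψ Φ =
      (if Ψ = Φ then 1 else 0) + if Ψ = Θ.piecewise 0 Φ then c Θ Φ else 0 := by
  have hcond : ((∀ τ ∉ Θ, Ψ τ = Φ τ) ∧ ∀ τ ∈ Θ, Ψ τ = 0) ↔ Ψ = Θ.piecewise 0 Φ := by
    simp only [funext_iff, piecewise, Pi.zero_apply]
    exact ⟨fun ⟨hout, hin⟩ τ => by split_ifs with hτ <;> simp [hout, hin, hτ],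
      fun h => ⟨fun τ hτ => by simpa [hτ] using h τ, fun τ hτ => by simpa [hτ] using h τ⟩⟩
  simp only [Ker, hcond, ite_mul, one_mul, zero_mul]

lemma mul_Ker_apply (c : Finset (Fin t) → (Fin t → Fin (q + 1)) → ℝ)
    (P : Matrix (Fin t → Fin (q + 1)) (Fin t → Fin (q + 1)) ℝ) (Θ : Finset (Fin t))
    (Ψ Φ : Fin t → Fin (q + 1)) :
    (P * Ker t q c Θ) Ψ Φ = P Ψ Φ + P Ψ (Θ.piecewise 0 Φ) * c Θ Φ := by
  simp [Matrix.mul_apply, Ker_apply, mul_add, sum_add_distrib]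

end Kernel

section Cumulants

variable {t q : ℕ} {c : Finset (Fin t) → (Fin t → Fin (q + 1)) → ℝ}

open Finset

lemma sum_partitionsFrom_insert_prod_cumulant
    (hloc : ∀ (Θ : Finset (Fin t)) (φ φ' : (Fin t) → Fin (q + 1)),
      (∀ τ ∈ Θ, φ τ = φ' τ) → c Θ φ = c Θ φ')
    (hnull : ∀ (Θ : Finset (Fin t)) (φ : (Fin t) → Fin (q + 1)),
      (∃ τ ∈ Θ, φ τ = 0) → c Θ φ = 0)
    {S : Finset (Finset (Fin t))} {Θ : Finset (Fin t)} (hΘS : Θ ∉ S)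
    (Φ : Fin t → Fin (q + 1)) :
    ∑ π ∈ partitionsFrom (insert Θ S) (tupleSupp t q Φ), ∏ B ∈ π, c B Φ =
      ∑ π ∈ partitionsFrom S (tupleSupp t q Φ), ∏ B ∈ π, c B Φ +
        (∑ π ∈ partitionsFrom S (tupleSupp t q (Θ.piecewise 0 Φ)),
          ∏ B ∈ π, c B (Θ.piecewise 0 Φ)) * c Θ Φ := by
  by_cases hΘ : Θ ⊆ tupleSupp t q Φ
  · rw [sum_partitionsFrom_insert hΘS hΘ, tupleSupp_piecewise_zero, sum_mul]
    congr 1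
    refine sum_congr rfl fun σ hσ => ?_
    obtain ⟨hσS, -, hσs⟩ := mem_partitionsFrom.1 hσ
    rw [prod_insert fun h => hΘS (hσS h), mul_comm]
    congr 1
    refine prod_congr rfl fun B hB => hloc B _ _ fun τ hτ => ?_
    have hτΘ : τ ∉ Θ := (mem_sdiff.1 (hσs ▸ le_sup (f := id) hB hτ)).2
    rw [piecewise_eq_of_notMem _ _ _ hτΘ]
  · have hzero : c Θ Φ = 0 := hnull Θ Φ (by simpa [not_subset, tupleSupp] using hΘ)
    rw [partitionsFrom_insert_of_not_subset hΘ, hzero, mul_zero, add_zero]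

lemma noncommProd_Ker_zero_apply
    (hloc : ∀ (Θ : Finset (Fin t)) (φ φ' : (Fin t) → Fin (q + 1)),
      (∀ τ ∈ Θ, φ τ = φ' τ) → c Θ φ = c Θ φ')
    (hnull : ∀ (Θ : Finset (Fin t)) (φ : (Fin t) → Fin (q + 1)),
      (∃ τ ∈ Θ, φ τ = 0) → c Θ φ = 0)
    (S : Finset (Finset (Fin t)))
    (hS : (S : Set (Finset (Fin t))).Pairwise
      fun Θ₁ Θ₂ => Commute (Ker t q c Θ₁) (Ker t q c Θ₂))
    (Φ : Fin t → Fin (q + 1)) :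
    S.noncommProd (Ker t q c) hS 0 Φ =
      ∑ π ∈ partitionsFrom S (tupleSupp t q Φ), ∏ B ∈ π, c B Φ := by
  induction S using Finset.induction_on generalizing Φ with
  | empty =>
    rw [noncommProd_empty, Matrix.one_apply, partitionsFrom_empty]
    obtain rfl | hΦ := eq_or_ne Φ 0
    · simp [tupleSupp_eq_empty.2 rfl]
    · simp [hΦ.symm, tupleSupp_eq_empty.not.2 hΦ]
  | insert Θ S hΘS ih =>
    rw [noncommProd_insert_of_notMem' _ _ _ _ hΘS, mul_Ker_apply, ih, ih,
      sum_partitionsFrom_insert_prod_cumulant hloc hnull hΘS]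

end Cumulants

/-- **Contraction of all kernel tensors yields the correlation tensor** (main
identity of Appendix A, Eq. (A5) in closed form): the entry of the (order
independent) product of all kernel tensors, at row the all-zero tuple and
column `Φ`, equals the moment–cumulant partition sum `𝐂 Φ`. -/
theorem kernel_contraction_eq_corr (t q : ℕ)
    (c : Finset (Fin t) → ((Fin t) → Fin (q + 1)) → ℝ)
    (hloc : ∀ (Θ : Finset (Fin t)) (φ φ' : (Fin t) → Fin (q + 1)),
      (∀ τ ∈ Θ, φ τ = φ' τ) → c Θ φ = c Θ φ')
    (hnull : ∀ (Θ : Finset (Fin t)) (φ : (Fin t) → Fin (q + 1)),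
      (∃ τ ∈ Θ, φ τ = 0) → c Θ φ = 0)
    (hcomm : ((Finset.univ.filter (fun Θ : Finset (Fin t) => Θ.Nonempty)) :
        Set (Finset (Fin t))).Pairwise
        (fun Θ₁ Θ₂ => Commute (Ker t q c Θ₁) (Ker t q c Θ₂)))
    (Φ : (Fin t) → Fin (q + 1)) :
    ((Finset.univ.filter (fun Θ : Finset (Fin t) => Θ.Nonempty)).noncommProd
        (fun Θ => Ker t q c Θ) hcomm)
      (fun _ => (0 : Fin (q + 1))) Φ = corr t q c Φ := by
  refine (noncommProd_Ker_zero_apply hloc hnull _ hcomm Φ).trans ?_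
  rw [corr]
  refine Finset.sum_congr (Finset.ext fun π => ?_) fun _ _ => rfl
  simp [Finset.mem_partitionsFrom, Finset.subset_iff, Set.PairwiseDisjoint, Set.Pairwise,
    Finset.disjoint_iff_inter_eq_empty]
end
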